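/- Let f : ℝⁿ → ℝ be locally Lipschitz and path differentiable, and let γ : [a,b] → ℝⁿ be a Lipschitz curve with −γ'(t) ∈ ∂ᶜf(γ(t)) for a.e. t. If f(γ(b)) ≥ f(γ(a)), then γ'(t) = 0 for almost every t, and hence γ is constant. -/

import Mathlib

/-!
Along the curve, path differentiability gives `(f ∘ γ)' = -‖γ'‖²` a.e. Since `f ∘ γ` is locally
Lipschitz, hence absolutely continuous, the fundamental theorem of calculus yields
`0 ≤ f (γ b) - f (γ a) = -∫ ‖γ'‖²`, forcing `γ' = 0` a.e.; a Lipschitz curve whose derivative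
vanishes a.e. is constant.
-/

open MeasureTheory Filter

/-- The Clarke subdifferential of `f : ℝⁿ → ℝ`: the closed convex hull of all limits of
gradients of `f` at nearby differentiability points. -/
noncomputable def clarkeSubdiff {n : ℕ} (f : EuclideanSpace ℝ (Fin n) → ℝ)
    (x : EuclideanSpace ℝ (Fin n)) : Set (EuclideanSpace ℝ (Fin n)) :=
  closure (convexHull ℝ
    {v | ∃ y : ℕ → EuclideanSpace ℝ (Fin n),
      (∀ k, DifferentiableAt ℝ f (y k)) ∧
      Tendsto y atTop (nhds x) ∧
      Tendsto (fun k => gradient f (y k)) atTop (nhds v)})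

/-- `f` is path differentiable: along every Lipschitz curve `γ`, for a.e. `t` the curve
is differentiable at `t`, and `f ∘ γ` is differentiable at `t` with derivative
`⟪v, γ′(t)⟫` for every Clarke subgradient `v ∈ ∂ᶜf(γ t)`. -/
def PathDifferentiable {n : ℕ} (f : EuclideanSpace ℝ (Fin n) → ℝ) : Prop :=
  ∀ (γ : ℝ → EuclideanSpace ℝ (Fin n)) (K : NNReal), LipschitzWith K γ →
    ∀ᵐ t : ℝ, ∃ d : EuclideanSpace ℝ (Fin n), HasDerivAt γ d t ∧
      ∀ v ∈ clarkeSubdiff f (γ t), HasDerivAt (f ∘ γ) (inner ℝ v d : ℝ) t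

open Set

theorem LocallyLipschitz.absolutelyContinuousOnInterval {X : Type*} [PseudoMetricSpace X]
    {f : ℝ → X} (hf : LocallyLipschitz f) (a b : ℝ) : AbsolutelyContinuousOnInterval f a b :=
  (hf.locallyLipschitzOn.exists_lipschitzOnWith_of_compact isCompact_uIcc).choose_spec
    |>.absolutelyContinuousOnInterval

theorem LipschitzWith.eq_of_ae_hasDerivAt_zero {F : Type*} [NormedAddCommGroup F]
    [NormedSpace ℝ F] {γ : ℝ → F} {K : NNReal} (hγ : LipschitzWith K γ) {s t : ℝ}
    (h : ∀ᵐ u, u ∈ uIcc s t → HasDerivAt γ 0 u) : γ s = γ t := by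
  obtain ⟨C, hC⟩ :=
    hγ.lipschitzOnWith.absolutelyContinuousOnInterval.const_of_ae_hasDerivAt_zero h
  rw [hC s left_mem_uIcc, hC t right_mem_uIcc]

theorem AbsolutelyContinuousOnInterval.ae_eq_zero_of_hasDerivAt_neg {g φ : ℝ → ℝ} {a b : ℝ}
    (hg : AbsolutelyContinuousOnInterval g a b) (hφ : 0 ≤ φ)
    (hder : ∀ᵐ t, t ∈ Icc a b → HasDerivAt g (-φ t) t) (hval : g a ≤ g b) :
    ∀ᵐ t, t ∈ Icc a b → φ t = 0 := by
  rcases lt_or_ge b a with hba | hab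
  · exact ae_of_all _ fun t ht => absurd (ht.1.trans ht.2) hba.not_ge
  have hφ_eq : φ =ᵐ[volume.restrict (Icc a b)] fun t => -deriv g t := by
    rw [EventuallyEq, ae_restrict_iff' measurableSet_Icc]
    filter_upwards [hder] with t ht hmem
    rw [(ht hmem).deriv, neg_neg]
  have hint : IntegrableOn φ (Icc a b) :=
    ((intervalIntegrable_iff_integrableOn_Icc_of_le hab).1 hg.intervalIntegrable_deriv).neg
      |>.congr hφ_eq.symm
  have hzero : ∫ t in Icc a b, φ t = 0 := by
    refine le_antisymm ?_ (setIntegral_nonneg measurableSet_Icc fun t _ => hφ t)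
    calc ∫ t in Icc a b, φ t = -∫ t in a..b, deriv g t := by
          rw [integral_congr_ae hφ_eq, integral_neg, intervalIntegral.integral_of_le hab,
            integral_Icc_eq_integral_Ioc]
      _ = g a - g b := by rw [hg.integral_deriv_eq_sub]; ring
      _ ≤ 0 := sub_nonpos.2 hval
  have hφ_zero := (integral_eq_zero_iff_of_nonneg hφ hint).1 hzero
  rwa [EventuallyEq, ae_restrict_iff' measurableSet_Icc] at hφ_zero

theorem PathDifferentiable.hasDerivAt_comp_of_neg_mem_clarkeSubdiff {n : ℕ}
    {f : EuclideanSpace ℝ (Fin n) → ℝ} (hf : PathDifferentiable f)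
    {γ γ' : ℝ → EuclideanSpace ℝ (Fin n)} {K : NNReal} (hγ : LipschitzWith K γ) {s : Set ℝ}
    (hder : ∀ᵐ t, t ∈ s → HasDerivAt γ (γ' t) t ∧ -γ' t ∈ clarkeSubdiff f (γ t)) :
    ∀ᵐ t, t ∈ s → HasDerivAt (f ∘ γ) (-‖γ' t‖ ^ 2) t := by
  filter_upwards [hf γ K hγ, hder] with t ⟨d, hd, hchain⟩ ht hmem
  obtain ⟨hγ', hsub⟩ := ht hmem
  rw [hd.unique hγ'] at hchain
  simpa [inner_neg_left, real_inner_self_eq_norm_sq] using hchain _ hsub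

theorem stmt8_general {n : ℕ} (f : EuclideanSpace ℝ (Fin n) → ℝ)
    (hf_lip : LocallyLipschitz f) (hf_pd : PathDifferentiable f)
    (a b : ℝ)
    (γ γ' : ℝ → EuclideanSpace ℝ (Fin n)) (K : NNReal) (hγ : LipschitzWith K γ)
    (hder : ∀ᵐ t : ℝ, t ∈ Set.Icc a b →
      HasDerivAt γ (γ' t) t ∧ -γ' t ∈ clarkeSubdiff f (γ t))
    (hval : f (γ a) ≤ f (γ b)) :
    (∀ᵐ t : ℝ, t ∈ Set.Icc a b → γ' t = 0) ∧
      ∀ s ∈ Set.Icc a b, ∀ t ∈ Set.Icc a b, γ s = γ t := by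
  have hac : AbsolutelyContinuousOnInterval (f ∘ γ) a b :=
    (hf_lip.comp hγ.locallyLipschitz).absolutelyContinuousOnInterval a b
  have hsq : ∀ᵐ t, t ∈ Icc a b → ‖γ' t‖ ^ 2 = 0 :=
    hac.ae_eq_zero_of_hasDerivAt_neg (fun t => sq_nonneg ‖γ' t‖)
      (hf_pd.hasDerivAt_comp_of_neg_mem_clarkeSubdiff hγ hder) hval
  have hzero : ∀ᵐ t, t ∈ Icc a b → γ' t = 0 := by
    filter_upwards [hsq] with t ht hmem
    simpa using ht hmem
  refine ⟨hzero, fun s hs t ht => hγ.eq_of_ae_hasDerivAt_zero ?_⟩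
  filter_upwards [hder, hzero] with u hu hu0 hmem
  have hmem' : u ∈ Icc a b := uIcc_subset_Icc hs ht hmem
  simpa [hu0 hmem'] using (hu hmem').1

/-- If `f` is locally Lipschitz and path differentiable, `γ : [a,b] → ℝⁿ`
is Lipschitz with `−γ′(t) ∈ ∂ᶜf(γ t)` a.e., and `f(γ b) ≥ f(γ a)`, then `γ′ = 0` a.e. on
`[a,b]` and `γ` is constant on `[a,b]`. -/
theorem stmt8 {n : ℕ} (f : EuclideanSpace ℝ (Fin n) → ℝ)
    (hf_lip : LocallyLipschitz f) (hf_pd : PathDifferentiable f)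
    (a b : ℝ) (hab : a ≤ b)
    (γ γ' : ℝ → EuclideanSpace ℝ (Fin n)) (K : NNReal) (hγ : LipschitzWith K γ)
    (hder : ∀ᵐ t : ℝ, t ∈ Set.Icc a b →
      HasDerivAt γ (γ' t) t ∧ -γ' t ∈ clarkeSubdiff f (γ t))
    (hval : f (γ a) ≤ f (γ b)) :
    (∀ᵐ t : ℝ, t ∈ Set.Icc a b → γ' t = 0) ∧
      ∀ s ∈ Set.Icc a b, ∀ t ∈ Set.Icc a b, γ s = γ t :=
  stmt8_general f hf_lip hf_pd a b γ γ' K hγ hder hval
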